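/- arXiv:1404.4211 — 2 statements merged into one kernel-verified Lean document; each statement's English description precedes it below -/
import Mathlib

section
/- Let K be a function field over a perfect field k and k̄ the algebraic closure of k inside an algebraic closure of K. Then for every valuation Q ∈ P_{k̄K/k} extending some P ∈ P_{K/k}, the inertia group I_{Q,K} (inside Aut_K(k̄K)) is trivial; i.e., the constant field extension k̄K/K is everywhere unramified. -/
set_option maxHeartbeats 1000000
set_option synthInstance.maxHeartbeats 200000

/-- A *function field* over `k` is a finitely generated field extension of `k` of
transcendence degree `1`, i.e. a finite extension of a rational function field `k(x)`. -/
def IsFunctionField (k K : Type*) [Field k] [Field K] [Algebra k K] : Prop :=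
  ∃ x : K, Transcendental k x ∧
    FiniteDimensional (IntermediateField.adjoin k {x}) K

section Aux

variable (k K : Type*) [Field k] [Field K] [Algebra k K]

/-- The key result, with no superfluous hypotheses: any automorphism of `k̄K/K` in the
inertia group of `Q` fixes every element algebraic over `k` (since nonzero algebraic
elements are units of `Q`, injecting `k̄` into the residue field), hence is the identity. -/
theorem aux_inertia_trivial
    (Q : ValuationSubring
      (IntermediateField.adjoin K {x : AlgebraicClosure K | IsAlgebraic k x}))
    (hk : ∀ c : k, algebraMap K _ (algebraMap k K c) ∈ Q) :
    Q.inertiaSubgroup K = ⊥ := by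
  classical
  letI : IsScalarTower k
      (IntermediateField.adjoin K {x : AlgebraicClosure K | IsAlgebraic k x})
      (AlgebraicClosure K) := IsScalarTower.of_algebraMap_eq fun _ => rfl
  revert Q
  set L : IntermediateField K (AlgebraicClosure K) :=
    IntermediateField.adjoin K {x : AlgebraicClosure K | IsAlgebraic k x} with hLdef
  intro Q hk
  -- the image of `k` lands in `Q`
  have hk' : ∀ c : k, algebraMap k L c ∈ Q := by
    intro c
    rw [IsScalarTower.algebraMap_apply k K L]
    exact hk c
  -- `Q` is the ring of integers of its valuation
  have hv : Valuation.Integers Q.valuation Q :=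
    ⟨Subtype.coe_injective, fun a => Q.valuation_le_one a,
     fun r hr => ⟨⟨r, Q.mem_of_valuation_le_one r hr⟩, rfl⟩⟩
  -- elements integral over `k` lie in `Q`
  have memQ : ∀ y : L, IsIntegral k y → y ∈ Q := by
    intro y hy
    obtain ⟨p, hmon, heval⟩ := hy
    have hint : IsIntegral Q y := by
      refine ⟨p.map ((algebraMap k L).codRestrict Q.toSubring hk'), hmon.map _, ?_⟩
      rw [Polynomial.eval₂_map]
      have : (algebraMap Q L).comp ((algebraMap k L).codRestrict Q.toSubring hk') =
          algebraMap k L := by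
        ext c; rfl
      rw [this]
      exact heval
    exact Q.mem_of_valuation_le_one y (hv.mem_of_integral hint)
  rw [eq_bot_iff]
  intro σ hσ
  rw [Subgroup.mem_bot]
  -- the action of `σ` on the residue field is trivial
  have hres : ∀ a : Q, IsLocalRing.residue Q (σ • a) = IsLocalRing.residue Q a := by
    intro a
    rw [IsLocalRing.ResidueField.residue_smul]
    rw [ValuationSubring.inertiaSubgroup, MonoidHom.mem_ker] at hσ
    exact congrArg (fun e => e (IsLocalRing.residue Q a)) hσ
  -- `σ` fixes every element of `L` that is integral over `k`
  have fix_alg : ∀ x : L, IsIntegral k x → σ.1 x = x := by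
    intro x hx
    have hσx : IsIntegral k (σ.1 x) :=
      hx.map ((σ.1 : L ≃ₐ[K] L).toAlgHom.restrictScalars k)
    rw [← sub_eq_zero]
    by_contra hne0
    -- the difference is a nonzero element integral over `k`, hence a unit of `Q`
    have hd : IsIntegral k (σ.1 x - x) := hσx.sub hx
    have hdQ : (σ.1 x - x : L) ∈ Q := memQ _ hd
    have hdinv : (σ.1 x - x : L)⁻¹ ∈ Q := memQ _ (hd.isAlgebraic.inv.isIntegral)
    have hunit : IsUnit (⟨σ.1 x - x, hdQ⟩ : Q) := by
      refine isUnit_iff_exists.2 ⟨⟨(σ.1 x - x)⁻¹, hdinv⟩, ?_, ?_⟩ <;>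
        · apply Subtype.ext
          simp [mul_inv_cancel₀ hne0, inv_mul_cancel₀ hne0]
    -- but the difference lies in the maximal ideal of `Q`
    have hmem : (⟨σ.1 x - x, hdQ⟩ : Q) ∈ IsLocalRing.maximalIdeal Q := by
      rw [← IsLocalRing.residue_eq_zero_iff]
      have ha : (⟨σ.1 x - x, hdQ⟩ : Q) = σ • (⟨x, memQ x hx⟩ : Q) - ⟨x, memQ x hx⟩ := by
        apply Subtype.ext
        rfl
      rw [ha, map_sub, hres, sub_self]
    exact mem_nonunits_iff.1 ((IsLocalRing.mem_maximalIdeal _).1 hmem) hunit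
  -- conclude `σ = 1` by adjoin induction
  have coe_int : ∀ y : L, IsAlgebraic k (y : AlgebraicClosure K) → IsIntegral k y := by
    intro y hy
    obtain ⟨p, hp0, hp⟩ := hy
    refine IsAlgebraic.isIntegral ⟨p, hp0, ?_⟩
    apply Subtype.coe_injective
    have h2 := Polynomial.aeval_algHom_apply
      (IsScalarTower.toAlgHom k L (AlgebraicClosure K)) y p
    simp only [IsScalarTower.coe_toAlgHom'] at h2
    simpa using h2.symm.trans hp
  have main : ∀ (z) (hz : z ∈ IntermediateField.adjoin K
      {x : AlgebraicClosure K | IsAlgebraic k x}), σ.1 ⟨z, hz⟩ = ⟨z, hz⟩ := by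
    intro z hz
    induction hz using IntermediateField.adjoin_induction with
    | mem x hx => exact fix_alg _ (coe_int _ hx)
    | algebraMap a => exact (σ.1 : L ≃ₐ[K] L).commutes a
    | add x y hx hy ihx ihy =>
      show σ.1 (⟨x, hx⟩ + ⟨y, hy⟩) = ⟨x, hx⟩ + ⟨y, hy⟩
      rw [map_add, ihx, ihy]
    | inv x hx ih =>
      show σ.1 (⟨x, hx⟩ : L)⁻¹ = (⟨x, hx⟩ : L)⁻¹
      rw [map_inv₀, ih]
    | mul x y hx hy ihx ihy =>
      show σ.1 (⟨x, hx⟩ * ⟨y, hy⟩) = ⟨x, hx⟩ * ⟨y, hy⟩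
      rw [map_mul, ihx, ihy]
  refine Subtype.ext (AlgEquiv.ext fun z => ?_)
  obtain ⟨z, hz⟩ := z
  exact main z hz
end Aux

/-- Let `K` be a function field over a perfect field `k` and `k̄K` the compositum of `K`
with the algebraic closure of `k` inside an algebraic closure of `K`.  Then for every
valuation `Q` of `k̄K` lying over a valuation `P ∈ 𝒫_{K/k}`, the inertia group `I_{Q,K}`
(inside `Aut_K(k̄K)`) is trivial: the constant field extension is everywhere unramified. -/
theorem constant_field_extension_unramified
    (k K : Type*) [Field k] [PerfectField k] [Field K] [Algebra k K]
    (hK : IsFunctionField k K)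
    (Q : ValuationSubring
      (IntermediateField.adjoin K {x : AlgebraicClosure K | IsAlgebraic k x}))
    (hk : ∀ c : k, algebraMap K _ (algebraMap k K c) ∈ Q)
    (hne : Q.comap (algebraMap K _) ≠ ⊤) :
    Q.inertiaSubgroup K = ⊥ := by
  exact aux_inertia_trivial k K Q hk
end

section
/- If k is a Hilbertian field and f ∈ k[x] is a polynomial whose evaluation map f_k : k → k is not surjective, then k \ f_k(k) is infinite. -/
open Polynomial

/-- A field `k` is *Hilbertian* if for every polynomial `p(t,x) ∈ k[t][x]` which is
irreducible and separable as a polynomial in `x` over the rational function field `k(t)`,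
there are infinitely many `t₀ ∈ k` such that the specialized polynomial `p(t₀, x)`
is irreducible in `k[x]`. -/
def IsHilbertianField (k : Type*) [Field k] : Prop :=
  ∀ p : Polynomial (Polynomial k),
    Irreducible (p.map (algebraMap (Polynomial k) (RatFunc k))) →
    (p.map (algebraMap (Polynomial k) (RatFunc k))).Separable →
    {t₀ : k | Irreducible (p.map (Polynomial.evalRingHom t₀))}.Infinite

/-!
Write `f = g(x^q)` with `q` a power of the exponential characteristic and `g` either of degree
at most one or with `g' ≠ 0`. In the second case, if `deg g ≥ 2`, then `g(x) - t` is irreducible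
and separable over `k(t)`, so Hilbertianity yields infinitely many `t₀` for which `g(x) - t₀` is
irreducible of degree `≥ 2`, hence has no root in `k`; such `t₀` are not values of `g`, nor
of `f`. If `deg g ≤ 1`, the values of `f` form an affine image of the additive subgroup
`{a^q}` of `k`, which is proper since `f` is not surjective, and a proper subgroup of an
infinite group has infinite complement.
-/

namespace Polynomial

theorem irreducible_map_C_sub_C_X {R : Type*} [CommRing R] [IsDomain R] (f : R[X]) :
    Irreducible (f.map C - C X : R[X][X]) := by
  rw [← MulEquiv.irreducible_iff Bivariate.swap, map_sub, Bivariate.swap_map_C,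
    Bivariate.swap_X, ← neg_sub]
  exact Associated.rfl.neg_right.irreducible (irreducible_X_sub_C f)

theorem exists_expand_eq_and_natDegree_eq_zero_of_derivative_eq_zero {R : Type*} [CommRing R]
    [IsDomain R] (p : ℕ) [ExpChar R p] (f : R[X]) :
    ∃ (n : ℕ) (g : R[X]),
      expand R (p ^ n) g = f ∧ (derivative g = 0 → g.natDegree = 0) := by
  induction hN : f.natDegree using Nat.strong_induction_on generalizing f with | _ N ih
  by_cases hf : derivative f = 0 ∧ f.natDegree ≠ 0
  · obtain ⟨hder, hdeg⟩ := hf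
    have hp : 2 ≤ p := by
      rcases ‹ExpChar R p› with _ | ⟨hprime⟩
      · exact absurd (derivative_eq_zero.mp hder) hdeg
      · exact hprime.two_le
    have hlt : (contract p f).natDegree < N := by
      have := natDegree_expand p (contract p f)
      rw [expand_contract' p hder] at this
      nlinarith [Nat.pos_of_ne_zero hdeg]
    obtain ⟨n, g, hg, hg'⟩ := ih _ hlt _ rfl
    refine ⟨n + 1, g, ?_, hg'⟩
    rw [pow_succ', ← expand_expand, hg, expand_contract' p hder]
  · exact ⟨0, f, by simp, by tauto⟩

end Polynomial

theorem AddSubgroup.infinite_compl {G : Type*} [AddGroup G] [Infinite G] {H : AddSubgroup G}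
    (hH : H ≠ ⊤) : (H : Set G)ᶜ.Infinite := by
  obtain ⟨a, ha⟩ := (SetLike.lt_iff_le_and_exists.mp (lt_top_iff_ne_top.mpr hH)).2
  by_cases hfin : (H : Set G).Finite
  · exact hfin.infinite_compl
  · refine (Set.Infinite.image (add_right_injective a).injOn hfin).mono ?_
    rintro _ ⟨h, hh, rfl⟩ hmem
    exact ha.2 ((H.add_mem_cancel_right hh).mp hmem)

theorem infinite_compl_range_mul_add {k : Type*} [DivisionRing k] [Infinite k] (φ : k →+ k)
    (a b : k) (h : ¬Function.Surjective fun x => a * φ x + b) :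
    (Set.range fun x => a * φ x + b)ᶜ.Infinite := by
  rcases eq_or_ne a 0 with rfl | ha
  · refine (Set.finite_singleton b).infinite_compl.mono (Set.compl_subset_compl.mpr ?_)
    rintro _ ⟨x, rfl⟩
    simp
  · let e : k ≃ k := (Equiv.mulLeft₀ a ha).trans (Equiv.addRight b)
    have hφ : ¬Function.Surjective φ := fun hφ => h (e.surjective.comp hφ)
    have hrange : (Set.range fun x => a * φ x + b) = e '' Set.range φ := Set.range_comp e φ
    rw [hrange, ← Set.image_compl_eq e.bijective]
    refine (AddSubgroup.infinite_compl (H := φ.range) ?_).image e.injective.injOn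
    exact fun htop => hφ (AddMonoidHom.range_eq_top.mp htop)

namespace IsHilbertianField

variable {k : Type*} [Field k]

theorem infinite (hk : IsHilbertianField k) : Infinite k := by
  have h := hk X (by rw [Polynomial.map_X]; exact irreducible_X)
    (by rw [Polynomial.map_X]; exact separable_X)
  exact Set.infinite_univ_iff.mp (h.mono (Set.subset_univ _))

theorem infinite_compl_range_eval (hk : IsHilbertianField k) {f : k[X]} (hdeg : 2 ≤ f.natDegree)
    (hder : derivative f ≠ 0) : (Set.range fun a => f.eval a)ᶜ.Infinite := by
  set p : k[X][X] := f.map C - C X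
  have hp : Irreducible p := irreducible_map_C_sub_C_X f
  have hp_deg : p.natDegree = f.natDegree := by
    rw [natDegree_sub_C, natDegree_map_eq_of_injective C_injective]
  have hirr : Irreducible (p.map (algebraMap k[X] (RatFunc k))) :=
    (hp.isPrimitive (by omega)).irreducible_iff_irreducible_map_fraction_map.mp hp
  have hsep : (p.map (algebraMap k[X] (RatFunc k))).Separable := by
    rw [separable_iff_derivative_ne_zero hirr, derivative_map, derivative_sub, derivative_C,
      sub_zero, derivative_map, Polynomial.map_map]
    exact (Polynomial.map_ne_zero_iff (RingHom.injective _)).mpr hder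
  have hspec (t : k) : p.map (evalRingHom t) = f - C t := by
    have hid : (evalRingHom t).comp C = RingHom.id k := eval₂RingHom_comp_C _ t
    simp [p, Polynomial.map_map, hid]
  refine (hk p hirr hsep).mono ?_
  rintro t ht ⟨a, rfl⟩
  rw [Set.mem_ofPred_eq, hspec] at ht
  exact ht.not_isRoot_of_natDegree_ne_one (x := a) (by rw [natDegree_sub_C]; omega) (by simp)

end IsHilbertianField

/-- If `k` is a Hilbertian field and `f ∈ k[x]` has non-surjective evaluation map
`k → k`, then the complement of the image is infinite. -/
theorem hilbertian_nonsurjective_polynomial_misses_infinitely_many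
    (k : Type*) [Field k] (hk : IsHilbertianField k)
    (f : Polynomial k) (h : ¬ Function.Surjective fun a : k => f.eval a) :
    (Set.range fun a : k => f.eval a)ᶜ.Infinite := by
  have := hk.infinite
  obtain ⟨n, g, rfl, hg⟩ :=
    exists_expand_eq_and_natDegree_eq_zero_of_derivative_eq_zero (ringExpChar k) f
  set φ := iterateFrobenius k (ringExpChar k) n
  have heval : (fun a => (expand k (ringExpChar k ^ n) g).eval a) = fun a => g.eval (φ a) := by
    ext a
    rw [expand_eval, iterateFrobenius_def]
  rw [heval] at h ⊢
  rcases lt_or_ge g.natDegree 2 with hlin | hdeg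
  · have hg_lin (y : k) : g.eval y = g.coeff 1 * y + g.coeff 0 := by
      conv_lhs => rw [eq_X_add_C_of_natDegree_le_one (by omega : g.natDegree ≤ 1)]
      simp
    simp only [hg_lin] at h ⊢
    exact infinite_compl_range_mul_add (φ : k →+ k) _ _ h
  · refine (hk.infinite_compl_range_eval hdeg fun h0 => ?_).mono
      (Set.compl_subset_compl.mpr (Set.range_comp_subset_range φ fun a => g.eval a))
    have := hg h0
    omega
end
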